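/- Let G be a bipartite simple graph on n vertices and S ⊆ V(G) with |S| = α. Then E(G_S) = E(G_{V(G)∖S}). -/

import Mathlib

/-
A proper 2-colouring gives a diagonal ±1 matrix `Z` with `Z² = 1`, `Z A Z = -A` and `Z D Z = D`
for every diagonal `D`. As `D_S + D_{V∖S} = 1`, this makes `A + D_{V∖S} = Z (1 - (A + D_S)) Z`,
so the spectrum of `G_{V∖S}` is `{1 - λᵢ}` where `{λᵢ}` is that of `G_S`. Since also
`|V∖S|/n = 1 - |S|/n`, each deviation `|λᵢ - |S|/n|` reappears unchanged.
-/

set_option linter.unusedSectionVars false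

open Matrix Finset

/-- Diagonal 0/1 indicator matrix of the loop set `S`. -/
def loopDiag {V : Type} [Fintype V] [DecidableEq V] (S : Finset V) : Matrix V V ℝ :=
  Matrix.diagonal (fun v => if v ∈ S then (1 : ℝ) else 0)

lemma adjMatrix_isHermitian {V : Type} [Fintype V] [DecidableEq V]
    (G : SimpleGraph V) [DecidableRel G.Adj] :
    (SimpleGraph.adjMatrix ℝ G).IsHermitian := by
  rw [Matrix.IsHermitian, conjTranspose_eq_transpose_of_trivial]
  exact G.isSymm_adjMatrix

lemma selfLoop_isHermitian {V : Type} [Fintype V] [DecidableEq V]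
    (G : SimpleGraph V) [DecidableRel G.Adj] (S : Finset V) :
    (SimpleGraph.adjMatrix ℝ G + loopDiag S).IsHermitian :=
  (adjMatrix_isHermitian G).add (Matrix.isHermitian_diagonal _)

/-- `∑ i, |λᵢ(M) - c|`, the eigenvalue sum of absolute deviations from `c`. -/
noncomputable def energyOf {V : Type} [Fintype V] [DecidableEq V]
    (M : Matrix V V ℝ) (hM : M.IsHermitian) (c : ℝ) : ℝ :=
  ∑ i, |hM.eigenvalues i - c|

/-- The energy of a simple graph: sum of absolute values of adjacency eigenvalues. -/
noncomputable def graphEnergy {V : Type} [Fintype V] [DecidableEq V]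
    (G : SimpleGraph V) [DecidableRel G.Adj] : ℝ :=
  energyOf _ (adjMatrix_isHermitian G) 0

/-- The energy of the self-loop graph `G_S`: `∑ i, |λᵢ(A(G)+D_S) - |S|/n|`. -/
noncomputable def selfLoopEnergy {V : Type} [Fintype V] [DecidableEq V]
    (G : SimpleGraph V) [DecidableRel G.Adj] (S : Finset V) : ℝ :=
  energyOf _ (selfLoop_isHermitian G S) ((S.card : ℝ) / (Fintype.card V))

open Polynomial

namespace Matrix

variable {n : Type*} [Fintype n] [DecidableEq n]

theorem charpoly_conj_of_mul_eq_one {R : Type*} [CommRing R] {P Q : Matrix n n R}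
    (h : Q * P = 1) (A : Matrix n n R) : (P * A * Q).charpoly = A.charpoly := by
  rw [charpoly_mul_comm, ← mul_assoc, h, one_mul]

theorem IsHermitian.charpoly_one_sub {A : Matrix n n ℝ} (hA : A.IsHermitian) :
    (1 - A).charpoly = ∏ i, (X - C (1 - hA.eigenvalues i)) := by
  set U : Matrix n n ℝ := (hA.eigenvectorUnitary : Matrix n n ℝ)
  have hUU : U * star U = 1 := Unitary.mul_star_self_of_mem hA.eigenvectorUnitary.2
  have hspec : 1 - A = U * diagonal (1 - hA.eigenvalues) * star U := by
    have h := hA.spectral_theorem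
    rw [Unitary.conjStarAlgAut_apply, RCLike.ofReal_real_eq_id, Function.id_comp] at h
    have hdiag : diagonal (1 - hA.eigenvalues) = 1 - diagonal hA.eigenvalues :=
      (diagonal_sub _ _).symm.trans (congrArg (· - _) diagonal_one)
    rw [hdiag, mul_sub, sub_mul, mul_one, hUU, ← h]
  rw [hspec, charpoly_conj_of_mul_eq_one (Unitary.star_mul_self_of_mem hA.eigenvectorUnitary.2),
    charpoly_diagonal]
  rfl

theorem IsHermitian.sum_comp_eigenvalues_of_charpoly_eq {A : Matrix n n ℝ} (hA : A.IsHermitian)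
    {d : n → ℝ} (h : A.charpoly = ∏ i, (X - C (d i))) (f : ℝ → ℝ) :
    ∑ i, f (hA.eigenvalues i) = ∑ i, f (d i) := by
  have hroots : univ.val.map hA.eigenvalues = univ.val.map d := by
    have := hA.roots_charpoly_eq_eigenvalues
    rw [h, roots_prod _ _ (prod_ne_zero_iff.mpr fun i _ => X_sub_C_ne_zero (d i))] at this
    simpa using this.symm
  simpa [Multiset.map_map] using congrArg (fun s => (s.map f).sum) hroots

end Matrix

theorem energyOf_eq_of_charpoly_eq_one_sub {V : Type} [Fintype V] [DecidableEq V]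
    {A B : Matrix V V ℝ} (hA : A.IsHermitian) (hB : B.IsHermitian)
    (h : B.charpoly = (1 - A).charpoly) (c : ℝ) :
    energyOf B hB (1 - c) = energyOf A hA c := by
  rw [energyOf, hB.sum_comp_eigenvalues_of_charpoly_eq (h.trans hA.charpoly_one_sub)
    fun x => |x - (1 - c)|, energyOf]
  congr 1 with i
  rw [← abs_neg]
  congr 1
  ring

theorem loopDiag_add_loopDiag_compl {V : Type} [Fintype V] [DecidableEq V] (S : Finset V) :
    loopDiag S + loopDiag Sᶜ = 1 := by
  rw [loopDiag, loopDiag, diagonal_add, ← diagonal_one]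
  congr 1 with v
  by_cases hv : v ∈ S <;> simp [hv]

namespace SimpleGraph.Coloring

variable {V : Type} [DecidableEq V] {G : SimpleGraph V}

def signMatrix (col : G.Coloring (Fin 2)) : Matrix V V ℝ :=
  diagonal fun v => if col v = 0 then 1 else -1

variable [Fintype V] (col : G.Coloring (Fin 2))

theorem signMatrix_mul_self : col.signMatrix * col.signMatrix = 1 := by
  rw [signMatrix, diagonal_mul_diagonal, ← diagonal_one]
  congr 1 with v
  split_ifs <;> norm_num

theorem signMatrix_mul_diagonal_mul_signMatrix (d : V → ℝ) :
    col.signMatrix * diagonal d * col.signMatrix = diagonal d := by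
  rw [signMatrix, diagonal_mul_diagonal, diagonal_mul_diagonal]
  congr 1 with v
  split_ifs <;> ring

theorem signMatrix_mul_adjMatrix_mul_signMatrix [DecidableRel G.Adj] :
    col.signMatrix * G.adjMatrix ℝ * col.signMatrix = -G.adjMatrix ℝ := by
  ext i j
  simp only [signMatrix, diagonal_mul, mul_diagonal, adjMatrix_apply]
  by_cases hij : G.Adj i j
  · have hne : col i ≠ col j := col.valid hij
    generalize col i = a, col j = b at hne
    fin_cases a <;> fin_cases b <;> simp_all
  · simp [hij]

end SimpleGraph.Coloring

theorem adjMatrix_add_loopDiag_compl_eq_conj {V : Type} [Fintype V] [DecidableEq V]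
    {G : SimpleGraph V} [DecidableRel G.Adj] (col : G.Coloring (Fin 2)) (S : Finset V) :
    G.adjMatrix ℝ + loopDiag Sᶜ =
      col.signMatrix * (1 - (G.adjMatrix ℝ + loopDiag S)) * col.signMatrix := by
  have hD : col.signMatrix * loopDiag S * col.signMatrix = loopDiag S :=
    col.signMatrix_mul_diagonal_mul_signMatrix _
  rw [mul_sub, sub_mul, mul_one, col.signMatrix_mul_self, mul_add, add_mul,
    col.signMatrix_mul_adjMatrix_mul_signMatrix, hD, ← loopDiag_add_loopDiag_compl S]
  abel

theorem charpoly_adjMatrix_add_loopDiag_compl {V : Type} [Fintype V] [DecidableEq V]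
    {G : SimpleGraph V} [DecidableRel G.Adj] (hG : G.Colorable 2) (S : Finset V) :
    (G.adjMatrix ℝ + loopDiag Sᶜ).charpoly = (1 - (G.adjMatrix ℝ + loopDiag S)).charpoly := by
  obtain ⟨col⟩ := hG
  rw [adjMatrix_add_loopDiag_compl_eq_conj col S,
    charpoly_conj_of_mul_eq_one col.signMatrix_mul_self]

/-- For a bipartite graph, `E(G_S) = E(G_{V∖S})`. -/
theorem selfLoopEnergy_compl_of_bipartite {V : Type} [Fintype V] [DecidableEq V]
    (G : SimpleGraph V) [DecidableRel G.Adj] (hG : G.Colorable 2) (S : Finset V) :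
    selfLoopEnergy G S = selfLoopEnergy G Sᶜ := by
  -- `n = 0` would break `|V∖S|/n = 1 - |S|/n` (as `0 / 0 = 0`); both energies are empty sums then.
  rcases isEmpty_or_nonempty V with _ | _
  · simp [selfLoopEnergy, energyOf]
  have hcard : (Sᶜ.card : ℝ) / Fintype.card V = 1 - S.card / Fintype.card V := by
    rw [card_compl, Nat.cast_sub (card_le_univ S), sub_div, div_self (by positivity)]
  rw [selfLoopEnergy, selfLoopEnergy, hcard, energyOf_eq_of_charpoly_eq_one_sub _ _
    (charpoly_adjMatrix_add_loopDiag_compl hG S)]
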